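/- Weak Cartesian prime factorizations are unique up to indexing and isomorphism of factors: let G be a connected digraph with loops with at least one unlooped vertex, let (G_ι)_{ι∈I} and (H_κ)_{κ∈K} be families of prime digraphs, and let a ∈ ∏_{ι∈I} G_ι and b ∈ ∏_{κ∈K} H_κ be vertices such that G ≅ ∏^a_{ι∈I} G_ι and G ≅ ∏^b_{κ∈K} H_κ. Then there is a bijection σ : I → K such that G_ι ≅ H_{σ(ι)} for every ι ∈ I. -/

import Mathlib

universe u

namespace Digraph

/-- Cartesian product of two digraphs. -/
def boxProd {α β : Type*} (G : Digraph α) (H : Digraph β) : Digraph (α × β) where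
  Adj p q := (G.Adj p.1 q.1 ∧ p.2 = q.2) ∨ (p.1 = q.1 ∧ H.Adj p.2 q.2)

/-- Cartesian product of a family of digraphs. -/
def prodFam {I : Type*} {V : I → Type*} (G : ∀ i, Digraph (V i)) : Digraph (∀ i, V i) where
  Adj u v := ∃ κ, (G κ).Adj (u κ) (v κ) ∧ ∀ i, i ≠ κ → u i = v i

/-- The shadow of a digraph: distinct vertices are adjacent iff there is an arc between them
in some direction. -/
def shadow {α : Type*} (G : Digraph α) : SimpleGraph α where
  Adj a b := a ≠ b ∧ (G.Adj a b ∨ G.Adj b a)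
  symm := by
    constructor
    rintro a b ⟨hab, h⟩
    exact ⟨hab.symm, h.symm⟩
  loopless := by
    constructor
    rintro a ⟨ha, -⟩
    exact ha rfl

/-- A digraph is connected if its shadow is connected. -/
def Connected {α : Type*} (G : Digraph α) : Prop := G.shadow.Connected

/-- Isomorphisms of digraphs. -/
abbrev Iso {α β : Type*} (G : Digraph α) (H : Digraph β) := RelIso G.Adj H.Adj

/-- A digraph is prime w.r.t. the Cartesian product if it is nontrivial, connected, has an
unlooped vertex, and in every representation as a product of two digraphs one factor
has exactly one vertex. -/
def IsPrime {α : Type u} (G : Digraph α) : Prop :=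
  G.Connected ∧ Nontrivial α ∧ (∃ v, ¬ G.Adj v v) ∧
    ∀ {A B : Type u} (GA : Digraph A) (GB : Digraph B),
      Nonempty (G.Iso (GA.boxProd GB)) →
        (Nonempty A ∧ Subsingleton A) ∨ (Nonempty B ∧ Subsingleton B)

/-- The vertex set of the connected component of `a` in the shadow of the product. -/
def weakComponent {I : Type*} {V : I → Type*} (G : ∀ i, Digraph (V i)) (a : ∀ i, V i) :
    Set (∀ i, V i) :=
  {v | (prodFam G).shadow.Reachable a v}

/-- The weak Cartesian product: the induced subdigraph of the Cartesian product on the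
connected component (in the shadow) of the vertex `a`. -/
def weakProd {I : Type*} {V : I → Type*} (G : ∀ i, Digraph (V i)) (a : ∀ i, V i) :
    Digraph (weakComponent G a) where
  Adj u v := (prodFam G).Adj u.1 v.1

end Digraph

/-!
Compose the two isomorphisms into an isomorphism `ψ` between the weak products and fix an
unlooped vertex `x₀`. Since opposite sides of a square in a Cartesian product have the same
direction, the preimage under `ψ` of the layer of a factor `Hs κ` through `ψ x₀` is closed under
exchanging the `i`-th coordinates of two of its vertices. Such a set is the box product of its
projection to coordinate `i` and its slice through `x₀`, so primality of `Hs κ` puts it inside a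
single layer of some `Gs i`, and symmetrically. The two resulting maps between the index sets are
mutually inverse, and `ψ` restricts to an isomorphism between the corresponding layers, which are
copies of the factors `Gs i` and `Hs κ` because `x₀` is unlooped.
-/

open Function

section Coordinates

variable {I : Type*} {W : I → Type*}

def EqOff (i : I) (u v : ∀ j, W j) : Prop := ∀ j, j ≠ i → u j = v j

namespace EqOff

variable {i j : I} {u v w : ∀ j, W j}

lemma refl (i : I) (u : ∀ j, W j) : EqOff i u u := fun _ _ => rfl

lemma symm (h : EqOff i u v) : EqOff i v u := fun j hj => (h j hj).symm

lemma trans (h : EqOff i u v) (h' : EqOff i v w) : EqOff i u w :=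
  fun j hj => (h j hj).trans (h' j hj)

lemma eq_of_apply_eq (h : EqOff i u v) (hi : u i = v i) : u = v := by
  funext j
  by_cases hj : j = i
  · subst hj; exact hi
  · exact h j hj

lemma apply_ne (h : EqOff i u v) (hne : u ≠ v) : u i ≠ v i :=
  fun hi => hne (h.eq_of_apply_eq hi)

lemma eq_of_apply_ne (h : EqOff j u v) (hi : u i ≠ v i) : i = j := by
  by_contra hij
  exact hi (h i hij)

variable [DecidableEq I]

lemma update_left (u : ∀ j, W j) (c : W i) : EqOff i (update u i c) u :=
  fun _ hj => update_of_ne hj _ _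

lemma update (h : EqOff j u v) (c : W i) : EqOff j (update u i c) (update v i c) := by
  intro l hl
  by_cases hli : l = i
  · subst hli; simp
  · simp [update_of_ne hli, h l hl]

lemma update_eq (h : EqOff i u v) (c : W i) : Function.update u i c = Function.update v i c :=
  (h.update c).eq_of_apply_eq (by simp)

end EqOff

/-- Opposite sides of a square in a Hamming graph are parallel. -/
lemma eqOff_of_square {S T S' T' : ∀ j, W j} {l₁ l₂ μ ν : I}
    (hST : EqOff l₁ S T) (hST₁ : S l₁ ≠ T l₁)
    (hSS' : EqOff l₂ S S') (hSS'₂ : S l₂ ≠ S' l₂)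
    (hTT' : EqOff μ T T') (hS'T' : EqOff ν S' T') (hTS' : T ≠ S') (hT'S : T' ≠ S) :
    EqOff l₁ S' T' := by
  by_cases hμ : μ = l₁
  · subst hμ
    by_cases hl : l₂ = μ
    · subst hl
      exact hSS'.symm.trans (hST.trans hTT')
    · have hoff : EqOff μ T' S := (hST.trans hTT').symm
      have hν : l₂ = ν := hS'T'.eq_of_apply_ne (by rw [hoff l₂ hl]; exact hSS'₂.symm)
      subst hν
      exact absurd (hoff.eq_of_apply_eq ((hS'T' μ (Ne.symm hl)).symm.trans
        (hSS' μ (Ne.symm hl)).symm)) hT'S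
  · have hS'T : S' l₁ ≠ T l₁ := by
      by_cases hl : l₂ = l₁
      · subst hl
        exact fun h => hTS' ((hSS'.symm.trans hST).eq_of_apply_eq h).symm
      · rw [← hSS' l₁ (Ne.symm hl)]
        exact hST₁
    have hν : l₁ = ν := hS'T'.eq_of_apply_ne (by rwa [← hTT' l₁ (Ne.symm hμ)])
    rw [hν]
    exact hS'T'

end Coordinates

lemma SimpleGraph.Reachable.induction_adj {α : Type*} {G : SimpleGraph α} {P : α → Prop}
    {u v : α} (h : G.Reachable u v) (hu : P u) (hadj : ∀ c d, G.Adj c d → P c → P d) : P v := by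
  rw [SimpleGraph.reachable_iff_reflTransGen] at h
  induction h with
  | refl => exact hu
  | tail _ hcd ih => exact hadj _ _ hcd ih

namespace Digraph

section Induce

variable {α β : Type*} {G : Digraph α} {H : Digraph β}

def induce (G : Digraph α) (s : Set α) : Digraph s where
  Adj u v := G.Adj u v

lemma shadow_induce_adj {s : Set α} {u v : s} :
    (G.induce s).shadow.Adj u v ↔ G.shadow.Adj u v := by
  simp [shadow, induce, Subtype.ext_iff]

lemma Iso.shadow_adj_iff (ψ : G.Iso H) {u v : α} :
    H.shadow.Adj (ψ u) (ψ v) ↔ G.shadow.Adj u v := by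
  simp [shadow, ψ.map_rel_iff]

def Iso.induce (ψ : G.Iso H) {s : Set α} {t : Set β} (h : ∀ x, x ∈ s ↔ ψ x ∈ t) :
    (G.induce s).Iso (H.induce t) where
  toEquiv := ψ.toEquiv.subtypeEquiv h
  map_rel_iff' := ψ.map_rel_iff

noncomputable def induceInduceIso (G : Digraph α) (s : Set α) (t : Set s) :
    ((G.induce s).induce t).Iso (G.induce (Subtype.val '' t)) where
  toEquiv := Equiv.Set.image Subtype.val t Subtype.val_injective
  map_rel_iff' := Iff.rfl

end Induce

section Product

variable {I : Type*} {W : I → Type*} {G : ∀ i, Digraph (W i)}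

lemma shadow_prodFam_adj {u v : ∀ i, W i} :
    (prodFam G).shadow.Adj u v ↔ ∃ i, (G i).shadow.Adj (u i) (v i) ∧ EqOff i u v := by
  constructor
  · rintro ⟨hne, ⟨i, hi, he⟩ | ⟨i, hi, he⟩⟩
    · exact ⟨i, ⟨EqOff.apply_ne he hne, Or.inl hi⟩, he⟩
    · exact ⟨i, ⟨(EqOff.apply_ne he hne.symm).symm, Or.inr hi⟩, EqOff.symm he⟩
  · rintro ⟨i, ⟨hne, hi | hi⟩, he⟩
    · exact ⟨fun h => hne (congrFun h i), Or.inl ⟨i, hi, he⟩⟩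
    · exact ⟨fun h => hne (congrFun h i), Or.inr ⟨i, hi, EqOff.symm he⟩⟩

lemma not_adj_apply_of_not_adj {x : ∀ i, W i} (hx : ¬ (prodFam G).Adj x x) (i : I) :
    ¬ (G i).Adj (x i) (x i) :=
  fun h => hx ⟨i, h, fun _ _ => rfl⟩

variable [DecidableEq I]

lemma shadow_prodFam_adj_update (z : ∀ i, W i) {i : I} {c d : W i} (h : (G i).shadow.Adj c d) :
    (prodFam G).shadow.Adj (update z i c) (update z i d) :=
  shadow_prodFam_adj.2 ⟨i, by simpa using h, ((EqOff.update_left z c).trans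
    (EqOff.update_left z d).symm)⟩

lemma update_mem_weakComponent {a z : ∀ i, W i} (hz : z ∈ weakComponent G a) {i : I}
    (hi : (G i).Connected) (w : W i) : update z i w ∈ weakComponent G a :=
  (hi.preconnected (z i) w).induction_adj (P := fun c => update z i c ∈ weakComponent G a)
    (by simpa using hz) fun _ _ hcd hc => hc.trans (shadow_prodFam_adj_update z hcd).reachable

lemma prodFam_adj_update_iff {x : ∀ i, W i} (hx : ¬ (prodFam G).Adj x x) {i : I} {w w' : W i} :
    (prodFam G).Adj (update x i w) (update x i w') ↔ (G i).Adj w w' := by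
  constructor
  · rintro ⟨j, hj, -⟩
    by_cases hji : j = i
    · subst hji; simpa using hj
    · simp only [update_of_ne hji] at hj
      exact absurd hj (not_adj_apply_of_not_adj hx j)
  · exact fun h => ⟨i, by simpa using h, fun j hj => by simp [update_of_ne hj]⟩

/-- Since `x i` is unlooped, the arc in the second alternative is not in coordinate `i`. -/
lemma prodFam_adj_iff_of_not_adj {x : ∀ i, W i} {i : I} (hx : ¬ (G i).Adj (x i) (x i))
    {z z' : ∀ i, W i} :
    (prodFam G).Adj z z' ↔
      ((G i).Adj (z i) (z' i) ∧ update z i (x i) = update z' i (x i)) ∨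
      (z i = z' i ∧ (prodFam G).Adj (update z i (x i)) (update z' i (x i))) := by
  constructor
  · rintro ⟨j, hj, he⟩
    by_cases hji : j = i
    · subst hji
      exact Or.inl ⟨hj, EqOff.update_eq he _⟩
    · refine Or.inr ⟨he i (Ne.symm hji), j, by simpa [update_of_ne hji] using hj, ?_⟩
      exact EqOff.update he _
  · rintro (⟨hadj, hupd⟩ | ⟨hzi, j, hj, he⟩)
    · refine ⟨i, hadj, fun l hl => ?_⟩
      simpa [update_of_ne hl] using congrFun hupd l
    · by_cases hji : j = i
      · subst hji
        exact absurd (by simpa using hj) hx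
      · refine ⟨j, by simpa [update_of_ne hji] using hj, fun l hl => ?_⟩
        by_cases hli : l = i
        · subst hli; exact hzi
        · simpa [update_of_ne hli] using he l hl

end Product

section MixClosed

variable {I : Type*} [DecidableEq I] {W : I → Type*} {G : ∀ i, Digraph (W i)}

def MixClosed (i : I) (S : Set (∀ j, W j)) : Prop :=
  ∀ u ∈ S, ∀ v ∈ S, update v i (u i) ∈ S

def mixClosedIso {i : I} {S : Set (∀ j, W j)} (hS : MixClosed i S) {x : ∀ j, W j} (hx : x ∈ S)
    (hxi : ¬ (G i).Adj (x i) (x i)) :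
    ((prodFam G).induce S).Iso
      (((G i).induce ((· i) '' S)).boxProd ((prodFam G).induce {z | z ∈ S ∧ z i = x i})) where
  toFun z := (⟨z.1 i, z.1, z.2, rfl⟩, ⟨update z.1 i (x i), hS x hx z.1 z.2, by simp⟩)
  invFun p := ⟨update p.2.1 i p.1.1, by
    obtain ⟨u, hu, hui⟩ := p.1.2
    rw [← hui]
    exact hS u hu _ p.2.2.1⟩
  left_inv z := by simp
  right_inv := by
    rintro ⟨w, s, hs, hsi⟩
    ext <;> simp [← hsi]
  map_rel_iff' := by
    intro z z'
    change _ ↔ (prodFam G).Adj z.1 z'.1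
    rw [prodFam_adj_iff_of_not_adj hxi]
    simp [boxProd, induce, Subtype.ext_iff]

lemma exists_forall_eqOff {S : Set (∀ j, W j)} (hS : ∀ i, MixClosed i S) {x : ∀ j, W j}
    (hx : x ∈ S) (hnt : S.Nontrivial)
    (h : ∀ i, ((· i) '' S).Subsingleton ∨ {z | z ∈ S ∧ z i = x i}.Subsingleton) :
    ∃ i, ∀ z ∈ S, EqOff i z x := by
  by_contra! hcon
  have hproj : ∀ i, ((· i) '' S).Subsingleton := fun i => (h i).resolve_right fun hslice => by
    obtain ⟨z, hz, hzx⟩ := hcon i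
    have hzx' : update z i (x i) = x := hslice ⟨hS i x hx z hz, by simp⟩ ⟨hx, rfl⟩
    exact hzx fun j hj => by simpa [update_of_ne hj] using congrFun hzx' j
  obtain ⟨u, hu, v, hv, huv⟩ := hnt
  exact huv (funext fun i => hproj i ⟨u, hu, rfl⟩ ⟨v, hv, rfl⟩)

end MixClosed

section WeakComponent

variable {I : Type*} [DecidableEq I] {W : I → Type*} {G : ∀ i, Digraph (W i)} {a : ∀ i, W i}

def weakUpdate (z : weakComponent G a) {i : I} (hi : (G i).Connected) (w : W i) :
    weakComponent G a :=
  ⟨update z.1 i w, update_mem_weakComponent z.2 hi w⟩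

lemma eq_of_forall_eqOff_imp {i : I} (hi : (G i).Connected) [Nontrivial (W i)]
    (x₀ : weakComponent G a) {i' : I}
    (h : ∀ z : weakComponent G a, EqOff i z.1 x₀.1 → EqOff i' z.1 x₀.1) : i' = i := by
  obtain ⟨w, hw⟩ := exists_ne (x₀.1 i)
  by_contra hne
  exact hw (by
    simpa [weakUpdate] using h (weakUpdate x₀ hi w) (EqOff.update_left _ _) i (Ne.symm hne))

variable {i : I} (hi : (G i).Connected)

@[simp]
lemma coe_weakUpdate (z : weakComponent G a) (w : W i) :
    (weakUpdate z hi w : ∀ j, W j) = update z.1 i w :=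
  rfl

lemma weakUpdate_eq_of_eqOff {z z' : weakComponent G a} (h : EqOff i z.1 z'.1) :
    weakUpdate z hi (z'.1 i) = z' :=
  Subtype.ext ((EqOff.update_left _ _).trans h |>.eq_of_apply_eq (by simp))

lemma weakUpdate_self (z : weakComponent G a) : weakUpdate z hi (z.1 i) = z :=
  weakUpdate_eq_of_eqOff hi (EqOff.refl i z.1)

lemma weakUpdate_weakUpdate (z : weakComponent G a) (c d : W i) :
    weakUpdate (weakUpdate z hi c) hi d = weakUpdate z hi d :=
  Subtype.ext (update_idem _ _ _)

lemma weakUpdate_congr {z z' : weakComponent G a} (h : EqOff i z.1 z'.1) (w : W i) :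
    weakUpdate z hi w = weakUpdate z' hi w :=
  Subtype.ext (EqOff.update_eq h w)

def layerIso (x : weakComponent G a) (hx : ¬ (prodFam G).Adj x.1 x.1) :
    (G i).Iso ((weakProd G a).induce {z | EqOff i z.1 x.1}) where
  toFun w := ⟨weakUpdate x hi w, EqOff.update_left _ _⟩
  invFun z := z.1.1 i
  left_inv w := by simp
  right_inv z := Subtype.ext (weakUpdate_eq_of_eqOff hi (EqOff.symm z.2))
  map_rel_iff' := prodFam_adj_update_iff hx

end WeakComponent

section Transfer

variable {I K : Type*} {W : I → Type*} {X : K → Type*}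
  {Gs : ∀ i, Digraph (W i)} {Hs : ∀ κ, Digraph (X κ)} {a : ∀ i, W i} {b : ∀ κ, X κ}
  (ψ : (weakProd Gs a).Iso (weakProd Hs b))

lemma shadow_adj_map {u v : weakComponent Gs a} :
    (prodFam Hs).shadow.Adj (ψ u).1 (ψ v).1 ↔ (prodFam Gs).shadow.Adj u.1 v.1 := by
  rw [← shadow_induce_adj (s := weakComponent Hs b),
    ← shadow_induce_adj (s := weakComponent Gs a)]
  exact ψ.shadow_adj_iff

variable [DecidableEq I] {i j : I} {κ : K} (hi : (Gs i).Connected)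

/-- Moving an edge of direction `j` one step in direction `i` spans a square, and `ψ` maps it to
a square of the other product. -/
lemma eqOff_map_weakUpdate_of_adj {v v' : weakComponent Gs a} (hji : j ≠ i)
    (hvv' : (Gs j).shadow.Adj (v.1 j) (v'.1 j)) (hj : EqOff j v.1 v'.1)
    (hψ : EqOff κ (ψ v).1 (ψ v').1) {c : W i} (hc : (Gs i).shadow.Adj (v.1 i) c) :
    EqOff κ (ψ (weakUpdate v hi c)).1 (ψ (weakUpdate v' hi c)).1 := by
  have hvi : v'.1 i = v.1 i := (hj i hji.symm).symm
  have hψne : ∀ {u u' : weakComponent Gs a}, u.1 j ≠ u'.1 j → (ψ u).1 ≠ (ψ u').1 :=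
    fun h he => h (by rw [ψ.injective (Subtype.ext he)])
  have hadj : ∀ u : weakComponent Gs a, u.1 i = v.1 i →
      (prodFam Hs).shadow.Adj (ψ u).1 (ψ (weakUpdate u hi c)).1 := fun u hu => by
    have := shadow_prodFam_adj_update u.1 (hu ▸ hc)
    rwa [update_eq_self, ← coe_weakUpdate hi, ← shadow_adj_map ψ] at this
  obtain ⟨l, hl, hSS'⟩ := shadow_prodFam_adj.1 (hadj v rfl)
  obtain ⟨μ, -, hTT'⟩ := shadow_prodFam_adj.1 (hadj v' hvi)
  obtain ⟨ν, -, hS'T'⟩ := shadow_prodFam_adj.1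
    ((shadow_adj_map ψ (u := weakUpdate v hi c) (v := weakUpdate v' hi c)).2
    (shadow_prodFam_adj.2 ⟨j, by simpa [update_of_ne hji] using hvv', EqOff.update hj c⟩))
  refine eqOff_of_square hψ (hψ.apply_ne (hψne hvv'.1)) hSS' hl.1 hTT' hS'T'
    (hψne ?_) (hψne ?_)
  · simpa [update_of_ne hji] using hvv'.1.symm
  · simpa [update_of_ne hji] using hvv'.1.symm

lemma eqOff_map_weakUpdate {v v' : weakComponent Gs a} (hji : j ≠ i)
    (hvv' : (Gs j).shadow.Adj (v.1 j) (v'.1 j)) (hj : EqOff j v.1 v'.1)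
    (hψ : EqOff κ (ψ v).1 (ψ v').1) (d : W i) :
    EqOff κ (ψ (weakUpdate v hi d)).1 (ψ (weakUpdate v' hi d)).1 := by
  have hvi : v'.1 i = v.1 i := (hj i hji.symm).symm
  refine (hi.preconnected (v.1 i) d).induction_adj
    (P := fun c => EqOff κ (ψ (weakUpdate v hi c)).1 (ψ (weakUpdate v' hi c)).1) ?_
    fun c c' hcc' ih => ?_
  · rwa [weakUpdate_self, ← hvi, weakUpdate_self]
  · have := eqOff_map_weakUpdate_of_adj ψ hi hji (by simpa [update_of_ne hji] using hvv')
      (EqOff.update hj c) ih (by simpa using hcc')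
    simpa only [weakUpdate_weakUpdate] using this

variable [DecidableEq K]

/-- Walk from `u` to `v` through the preimage of the `κ`-layer: an edge of direction `i` does not
change the exchanged vertex, and an edge of another direction is moved to it in direction `i`. -/
lemma eqOff_map_weakUpdate_apply (hκ : (Hs κ).Connected) {u v : weakComponent Gs a}
    (huv : EqOff κ (ψ u).1 (ψ v).1) :
    EqOff κ (ψ (weakUpdate v hi (u.1 i))).1 (ψ v).1 := by
  set m : X κ → weakComponent Gs a := fun c => ψ.symm (weakUpdate (ψ v) hκ c)
  have hm : ∀ c, (ψ (m c)).1 = update (ψ v).1 κ c := by simp [m]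
  suffices ∀ c, EqOff κ (ψ (weakUpdate (m c) hi (u.1 i))).1 (ψ v).1 by
    simpa [m, weakUpdate_self] using this ((ψ v).1 κ)
  intro c
  refine (hκ.preconnected ((ψ u).1 κ) c).induction_adj
    (P := fun c => EqOff κ (ψ (weakUpdate (m c) hi (u.1 i))).1 (ψ v).1) ?_
    fun c c' hcc' ih => ?_
  · simpa [m, weakUpdate_eq_of_eqOff hκ huv.symm, weakUpdate_self] using huv
  obtain ⟨j, hj, hjeq⟩ := shadow_prodFam_adj.1 ((shadow_adj_map ψ (u := m c) (v := m c')).1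
    (by rw [hm, hm]; exact shadow_prodFam_adj_update _ hcc'))
  by_cases hji : j = i
  · subst hji
    rwa [← weakUpdate_congr hi hjeq]
  · refine (eqOff_map_weakUpdate ψ hi hji hj hjeq ?_ (u.1 i)).symm.trans ih
    rw [hm, hm]
    exact (EqOff.update_left _ c).trans (EqOff.update_left _ c').symm

def isoOfLayers (hκ : (Hs κ).Connected) (x₀ : weakComponent Gs a)
    (hx₀ : ¬ (prodFam Gs).Adj x₀.1 x₀.1)
    (h : ∀ z, EqOff i z.1 x₀.1 ↔ EqOff κ (ψ z).1 (ψ x₀).1) : (Gs i).Iso (Hs κ) :=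
  (layerIso hi x₀ hx₀).trans
    ((ψ.induce h).trans (layerIso hκ (ψ x₀) fun h => hx₀ (ψ.map_rel_iff.1 h)).symm)

end Transfer

section Prime

variable {I K : Type u} [DecidableEq I] [DecidableEq K] {W : I → Type u} {X : K → Type u}
  {Gs : ∀ i, Digraph (W i)} {Hs : ∀ κ, Digraph (X κ)} {a : ∀ i, W i} {b : ∀ κ, X κ}
  (ψ : (weakProd Gs a).Iso (weakProd Hs b))

lemma exists_eqOff_of_isPrime (hG : ∀ i, (Gs i).Connected) (x₀ : weakComponent Gs a)
    (hx₀ : ¬ (prodFam Gs).Adj x₀.1 x₀.1) {κ : K} (hκ : (Hs κ).IsPrime) :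
    ∃ i, ∀ z, EqOff κ (ψ z).1 (ψ x₀).1 → EqOff i z.1 x₀.1 := by
  have hy₀ : ¬ (prodFam Hs).Adj (ψ x₀).1 (ψ x₀).1 := fun h => hx₀ (ψ.map_rel_iff.1 h)
  set L : Set (weakComponent Gs a) := {z | EqOff κ (ψ z).1 (ψ x₀).1}
  have hmix : ∀ i, MixClosed i (Subtype.val '' L) := by
    rintro i _ ⟨u, hu, rfl⟩ _ ⟨v, hv, rfl⟩
    exact ⟨weakUpdate v (hG i) (u.1 i),
      (eqOff_map_weakUpdate_apply ψ (hG i) hκ.1 (hu.trans hv.symm)).trans hv, rfl⟩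
  have hiso : (Hs κ).Iso ((prodFam Gs).induce (Subtype.val '' L)) :=
    (layerIso hκ.1 (ψ x₀) hy₀).trans
      ((Iso.induce ψ.symm fun y => by simp [L]).trans (induceInduceIso _ _ _))
  have hx₀L : x₀.1 ∈ Subtype.val '' L := ⟨x₀, EqOff.refl _ _, rfl⟩
  have hnt : (Subtype.val '' L).Nontrivial := by
    have := hκ.2.1
    exact Set.nontrivial_coe_sort.1 hiso.toEquiv.symm.nontrivial
  obtain ⟨i, hi⟩ := exists_forall_eqOff hmix hx₀L hnt fun i => by
    rcases hκ.2.2.2 _ _ ⟨hiso.trans (mixClosedIso (hmix i) hx₀L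
      (not_adj_apply_of_not_adj hx₀ i))⟩ with ⟨-, h⟩ | ⟨-, h⟩
    · exact Or.inl (Set.subsingleton_coe _ |>.1 h)
    · exact Or.inr (Set.subsingleton_coe _ |>.1 h)
  exact ⟨i, fun z hz => hi z.1 ⟨z, hz, rfl⟩⟩

end Prime

end Digraph

open Digraph in
theorem weak_prime_factorization_unique_general {V : Type u} (G : Digraph V)
    (hul : ∃ v, ¬ G.Adj v v)
    {I K : Type u} {W : I → Type u} {X : K → Type u}
    (Gs : ∀ i, Digraph (W i)) (Hs : ∀ κ, Digraph (X κ))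
    (a : ∀ i, W i) (b : ∀ κ, X κ)
    (hGs : ∀ i, (Gs i).IsPrime) (hHs : ∀ κ, (Hs κ).IsPrime)
    (h₁ : Nonempty (G.Iso (Digraph.weakProd Gs a)))
    (h₂ : Nonempty (G.Iso (Digraph.weakProd Hs b))) :
    ∃ σ : I ≃ K, ∀ i, Nonempty ((Gs i).Iso (Hs (σ i))) := by
  classical
  obtain ⟨φ₁⟩ := h₁
  obtain ⟨φ₂⟩ := h₂
  obtain ⟨v₀, hv₀⟩ := hul
  set ψ := φ₁.symm.trans φ₂
  set x₀ := φ₁ v₀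
  have hx₀ : ¬ (prodFam Gs).Adj x₀.1 x₀.1 := fun h => hv₀ (φ₁.map_rel_iff.1 h)
  have hy₀ : ¬ (prodFam Hs).Adj (ψ x₀).1 (ψ x₀).1 := fun h => hx₀ (ψ.map_rel_iff.1 h)
  choose τ hτ using fun κ => exists_eqOff_of_isPrime ψ (fun i => (hGs i).1) x₀ hx₀ (hHs κ)
  choose υ hυ using fun i =>
    exists_eqOff_of_isPrime ψ.symm (fun κ => (hHs κ).1) (ψ x₀) hy₀ (hGs i)
  have hυ' : ∀ i z, EqOff i z.1 x₀.1 → EqOff (υ i) (ψ z).1 (ψ x₀).1 := fun i z hz =>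
    hυ i (ψ z) (by simpa using hz)
  have hτυ : ∀ i, τ (υ i) = i := fun i =>
    have := (hGs i).2.1
    eq_of_forall_eqOff_imp (hGs i).1 x₀ fun z hz => hτ _ z (hυ' i z hz)
  have hυτ : ∀ κ, υ (τ κ) = κ := fun κ =>
    have := (hHs κ).2.1
    eq_of_forall_eqOff_imp (hHs κ).1 (ψ x₀) fun y hy => by
      simpa using hυ _ y (by simpa using hτ κ (ψ.symm y) (by simpa using hy))
  exact ⟨⟨υ, τ, hτυ, hυτ⟩, fun i =>
    ⟨isoOfLayers ψ (hGs i).1 (hHs (υ i)).1 x₀ hx₀ fun z => ⟨hυ' i z, fun hz => hτυ i ▸ hτ _ z hz⟩⟩⟩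

/-- Uniqueness of weak Cartesian prime factorizations: the index sets are in bijection
via a bijection matching isomorphic factors. -/
theorem weak_prime_factorization_unique {V : Type u} (G : Digraph V)
    (hconn : G.Connected) (hul : ∃ v, ¬ G.Adj v v)
    {I K : Type u} {W : I → Type u} {X : K → Type u}
    (Gs : ∀ i, Digraph (W i)) (Hs : ∀ κ, Digraph (X κ))
    (a : ∀ i, W i) (b : ∀ κ, X κ)
    (hGs : ∀ i, (Gs i).IsPrime) (hHs : ∀ κ, (Hs κ).IsPrime)
    (h₁ : Nonempty (G.Iso (Digraph.weakProd Gs a)))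
    (h₂ : Nonempty (G.Iso (Digraph.weakProd Hs b))) :
    ∃ σ : I ≃ K, ∀ i, Nonempty ((Gs i).Iso (Hs (σ i))) :=
  weak_prime_factorization_unique_general G hul Gs Hs a b hGs hHs h₁ h₂
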